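/- (Lemma 2 of Appendix B, correlation-time expansion) Fix real numbers a11, a12, a21, a22, σx, σy with a22 ≠ 0 and ã ≠ 0. Let ε₀ > 0 and let c11, c12, c22 : (0, ε₀) → ℝ be such that for each ε ∈ (0, ε₀), (c11(ε), c12(ε), c22(ε)) solves the two-scale Lyapunov system, with c11 and c12 bounded on (0, ε₀) and c11(ε) ≥ c₀ for some constant c₀ > 0. Define the correlation time Tc(ε) := (1/c11(ε)) * (−c11(ε)/ã + ε*c12(ε)*a12/(a22*ã)). Then Tc(ε) = −1/(ã*(1 − ε*â)) + O(ε²) as ε → 0⁺. -/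

import Mathlib

/-!
Multiplying the second Lyapunov equation by `ε` gives `a22 c12 = -a21 c11 - ε D` with
`D = a11 c12 + a12 c22`, hence `Tc = -(1 + ε â)/ã - ε² a12 D / (a22² ã c11)`, while
`-1/(ã (1 - ε â)) = -(1 + ε â)/ã - ε² â² / (ã (1 - ε â))`. The error is therefore `ε²` times a
quantity that stays bounded as `ε → 0⁺`: `c12` is bounded by assumption, `c22` is an affine
function of `c12` by the third equation, `1/c11 ≤ 1/c₀`, and `1 - ε â → 1`.
-/

/-- `f = O(ε²)` as `ε → 0⁺`, with the bound holding inside `(0, ε₀)`. -/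
def IsO2 (ε₀ : ℝ) (f : ℝ → ℝ) : Prop :=
  ∃ C ε₁ : ℝ, 0 < C ∧ 0 < ε₁ ∧ ε₁ ≤ ε₀ ∧ ∀ ε, 0 < ε → ε < ε₁ → |f ε| ≤ C * ε ^ 2

/-- The two-scale Lyapunov system. -/
def SolvesLyapunov (a11 a12 a21 a22 σx σy ε c11 c12 c22 : ℝ) : Prop :=
  0 = σx ^ 2 + 2 * a11 * c11 + 2 * a12 * c12 ∧
  0 = a11 * c12 + a12 * c22 + c11 * a21 / ε + c12 * a22 / ε ∧
  0 = σy ^ 2 / ε + 2 * c12 * a21 / ε + 2 * c22 * a22 / ε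

open Filter Topology Asymptotics Set

theorem isO2_of_isBigO {ε₀ : ℝ} (hε₀ : 0 < ε₀) {f : ℝ → ℝ}
    (hf : f =O[𝓝[>] 0] fun ε => ε ^ 2) : IsO2 ε₀ f := by
  obtain ⟨C, hC, hfC⟩ := hf.exists_pos
  obtain ⟨ε₁, hε₁, hsub⟩ := mem_nhdsGT_iff_exists_Ioo_subset.mp hfC.bound
  refine ⟨C, min ε₀ ε₁, hC, lt_min hε₀ hε₁, min_le_left _ _, fun ε hε hεlt => ?_⟩
  simpa using hsub ⟨hε, hεlt.trans_le (min_le_right _ _)⟩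

theorem isBigO_one_of_forall_abs_le {ε₀ M : ℝ} (hε₀ : 0 < ε₀) {u : ℝ → ℝ}
    (hu : ∀ ε, 0 < ε → ε < ε₀ → |u ε| ≤ M) : u =O[𝓝[>] 0] fun _ => (1 : ℝ) :=
  IsBoundedUnder.isBigO_one ℝ ⟨M, eventually_map.2 <| by
    filter_upwards [Ioo_mem_nhdsGT hε₀] with ε hε using hu ε hε.1 hε.2⟩

namespace SolvesLyapunov

variable {a11 a12 a21 a22 σx σy ε c11 c12 c22 : ℝ}

theorem c22_eq (h : SolvesLyapunov a11 a12 a21 a22 σx σy ε c11 c12 c22) (ha22 : a22 ≠ 0) (hε : ε ≠ 0) :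
    c22 = -σy ^ 2 / (2 * a22) - a21 / a22 * c12 := by
  have h3 := h.2.2
  field_simp at h3 ⊢
  linarith

theorem correlationTime_error_eq (h : SolvesLyapunov a11 a12 a21 a22 σx σy ε c11 c12 c22)
    (t : ℝ) (ha22 : a22 ≠ 0) (hε : ε ≠ 0) (hc11 : c11 ≠ 0)
    (hgeom : 1 - ε * (a12 * a21 / a22 ^ 2) ≠ 0) :
    (1 / c11) * (-c11 / t + ε * c12 * a12 / (a22 * t))
        + 1 / (t * (1 - ε * (a12 * a21 / a22 ^ 2)))
      = t⁻¹ * (ε ^ 2 * ((a12 * a21 / a22 ^ 2) ^ 2 / (1 - ε * (a12 * a21 / a22 ^ 2))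
          - a12 / a22 ^ 2 * (a11 * c12 + a12 * c22) * c11⁻¹)) := by
  have hc12 : c12 * a22 = -(c11 * a21) - ε * (a11 * c12 + a12 * c22) := by
    have h2 := h.2.1
    field_simp at h2
    linarith
  have hg : -1 + ε * c12 * a12 / (a22 * c11) + 1 / (1 - ε * (a12 * a21 / a22 ^ 2))
      = ε ^ 2 * ((a12 * a21 / a22 ^ 2) ^ 2 / (1 - ε * (a12 * a21 / a22 ^ 2))
          - a12 / a22 ^ 2 * (a11 * c12 + a12 * c22) * c11⁻¹) := by
    have hden : a22 ^ 2 - ε * a12 * a21 ≠ 0 := by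
      contrapose! hgeom
      field_simp
      linear_combination hgeom
    field_simp
    linear_combination ε * a12 * (a22 ^ 2 - ε * a12 * a21) * hc12
  rw [← hg]
  field_simp

end SolvesLyapunov

theorem stmt7_general (a11 a12 a21 a22 σx σy : ℝ) (ha22 : a22 ≠ 0)
    (ε₀ : ℝ) (hε₀ : 0 < ε₀) (c11 c12 c22 : ℝ → ℝ)
    (hsol : ∀ ε, 0 < ε → ε < ε₀ →
      SolvesLyapunov a11 a12 a21 a22 σx σy ε (c11 ε) (c12 ε) (c22 ε))
    (hbdd : ∃ M : ℝ, ∀ ε, 0 < ε → ε < ε₀ → |c11 ε| ≤ M ∧ |c12 ε| ≤ M)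
    (c₀ : ℝ) (hc₀ : 0 < c₀) (hc11 : ∀ ε, 0 < ε → ε < ε₀ → c₀ ≤ c11 ε) :
    IsO2 ε₀ (fun ε =>
      (1 / c11 ε) *
          (-(c11 ε) / (a11 - a12 * a21 / a22)
            + ε * c12 ε * a12 / (a22 * (a11 - a12 * a21 / a22)))
        + 1 / ((a11 - a12 * a21 / a22) * (1 - ε * (a12 * a21 / a22 ^ 2)))) := by
  obtain ⟨M, hM⟩ := hbdd
  set â := a12 * a21 / a22 ^ 2
  have hsmall : ∀ᶠ ε in 𝓝[>] (0 : ℝ), ε ∈ Ioo 0 ε₀ := Ioo_mem_nhdsGT hε₀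
  have hc12 : c12 =O[𝓝[>] 0] fun _ => (1 : ℝ) :=
    isBigO_one_of_forall_abs_le hε₀ fun ε h h' => (hM ε h h').2
  have hc22 : c22 =O[𝓝[>] 0] fun _ => (1 : ℝ) := by
    refine ((isBigO_const_one ℝ (-σy ^ 2 / (2 * a22)) _).sub
      (hc12.const_mul_left (a21 / a22))).congr' ?_ EventuallyEq.rfl
    filter_upwards [hsmall] with ε ⟨hε, hεlt⟩
    exact ((hsol ε hε hεlt).c22_eq ha22 hε.ne').symm
  have hinv : (fun ε => (c11 ε)⁻¹) =O[𝓝[>] 0] fun _ => (1 : ℝ) := by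
    refine isBigO_one_of_forall_abs_le hε₀ (M := c₀⁻¹) fun ε h h' => ?_
    rw [abs_inv, abs_of_pos (hc₀.trans_le (hc11 ε h h'))]
    exact inv_anti₀ hc₀ (hc11 ε h h')
  have hgeom : Tendsto (fun ε => 1 - ε * â) (𝓝[>] 0) (𝓝 1) :=
    ((by fun_prop : Continuous fun ε : ℝ => 1 - ε * â).tendsto' 0 1 (by simp)).mono_left
      nhdsWithin_le_nhds
  have hrem : (fun ε => â ^ 2 / (1 - ε * â)
      - a12 / a22 ^ 2 * (a11 * c12 ε + a12 * c22 ε) * (c11 ε)⁻¹) =O[𝓝[>] 0] fun _ => (1 : ℝ) :=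
    ((tendsto_const_nhds.div hgeom one_ne_zero).isBigO_one ℝ).sub <| by
      simpa only [mul_one] using
        (((hc12.const_mul_left a11).add (hc22.const_mul_left a12)).const_mul_left
          (a12 / a22 ^ 2)).mul hinv
  apply isO2_of_isBigO hε₀
  refine ((((isBigO_refl (fun ε : ℝ => ε ^ 2) _).mul hrem).const_mul_left
    (a11 - a12 * a21 / a22)⁻¹).congr' ?_ (Eventually.of_forall fun ε => mul_one _))
  filter_upwards [hsmall, hgeom.eventually_ne one_ne_zero] with ε ⟨hε, hεlt⟩ hne
  exact ((hsol ε hε hεlt).correlationTime_error_eq _ ha22 hε.ne'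
    (hc₀.trans_le (hc11 ε hε hεlt)).ne' hne).symm

/-- Lemma 2 of Appendix B: the correlation time satisfies
`Tc(ε) = −1/(ã(1 − εâ)) + O(ε²)` as `ε → 0⁺`. -/
theorem stmt7 (a11 a12 a21 a22 σx σy : ℝ) (ha22 : a22 ≠ 0)
    (hat : a11 - a12 * a21 / a22 ≠ 0)
    (ε₀ : ℝ) (hε₀ : 0 < ε₀) (c11 c12 c22 : ℝ → ℝ)
    (hsol : ∀ ε, 0 < ε → ε < ε₀ →
      SolvesLyapunov a11 a12 a21 a22 σx σy ε (c11 ε) (c12 ε) (c22 ε))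
    (hbdd : ∃ M : ℝ, ∀ ε, 0 < ε → ε < ε₀ → |c11 ε| ≤ M ∧ |c12 ε| ≤ M)
    (c₀ : ℝ) (hc₀ : 0 < c₀) (hc11 : ∀ ε, 0 < ε → ε < ε₀ → c₀ ≤ c11 ε) :
    IsO2 ε₀ (fun ε =>
      (1 / c11 ε) *
          (-(c11 ε) / (a11 - a12 * a21 / a22)
            + ε * c12 ε * a12 / (a22 * (a11 - a12 * a21 / a22)))
        + 1 / ((a11 - a12 * a21 / a22) * (1 - ε * (a12 * a21 / a22 ^ 2)))) :=
  stmt7_general a11 a12 a21 a22 σx σy ha22 ε₀ hε₀ c11 c12 c22 hsol hbdd c₀ hc₀ hc11
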